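/- arXiv:1909.09658 — 3 statements merged into one kernel-verified Lean document; each statement's English description precedes it below -/
import Mathlib

section
/- Let P be a finite graded poset. Then the birational antichain gyration and birational order gyration are intertwined by Θ ∘ Δ⁻¹: namely Θ ∘ Δ⁻¹ ∘ BAG = BOG ∘ Θ ∘ Δ⁻¹ as maps on positive labelings of P. -/
/-!
Birational (commutative) antichain/order rowmotion on a finite poset `P`, with labels in `ℝ`
and positive labelings, following Joseph–Roby, "Birational and noncommutative lifts of
antichain toggling and rowmotion".
-/

open Finset

attribute [local instance] Classical.propDecidable

variable {P : Type*} [Fintype P] [PartialOrder P]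

/-- `c` is a saturated chain in `P`: consecutive entries are covers. -/
def SatChain {P : Type*} [PartialOrder P] {k : ℕ} (c : Fin (k + 1) → P) : Prop :=
  ∀ i : Fin k, c i.castSucc ⋖ c i.succ

/-- `c` is a maximal chain of `P`: a saturated chain from a minimal element to a maximal
element of `P` (equivalently, the restriction to `P` of a maximal chain
`0̂ ⋖ y₁ ⋖ ⋯ ⋖ y_k ⋖ 1̂` of `P̂`). -/
def MaxChain {P : Type*} [PartialOrder P] {k : ℕ} (c : Fin (k + 1) → P) : Prop :=
  SatChain c ∧ IsMin (c 0) ∧ IsMax (c (Fin.last k))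

/-- `Υ_v(g)`: the sum over all maximal chains `(y₁, …, y_k)` of `P` through `v` of the
products `g(y₁)⋯g(y_k)` of the labels along the chain. -/
noncomputable def Upsilon (g : P → ℝ) (v : P) : ℝ :=
  ∑ k ∈ range (Fintype.card P),
    ∑ c ∈ univ.filter (fun c : Fin (k + 1) → P => MaxChain c ∧ ∃ j, c j = v),
      (List.ofFn (g ∘ c)).prod

/-- The birational antichain toggle `τ_v`: it replaces the label at `v` by `C / Υ_v(g)` and
fixes all other labels. -/
noncomputable def atog (C : ℝ) (v : P) (g : P → ℝ) : P → ℝ :=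
  fun x => if x = v then C / Upsilon g v else g x

/-- `∑_{y ∈ P̂, y ⋖ x} f(y)`, with the convention `f(0̂) = 1` (the unique lower cover in
`P̂` of a minimal element of `P` is `0̂`). -/
noncomputable def lowSum (f : P → ℝ) (x : P) : ℝ :=
  (if IsMin x then 1 else 0) + ∑ y ∈ univ.filter (fun y => y ⋖ x), f y

/-- `∑_{y ∈ P̂, y ⋗ x} 1/f(y)`, with the convention `f(1̂) = C`. -/
noncomputable def upInvSum (C : ℝ) (f : P → ℝ) (x : P) : ℝ :=
  (if IsMax x then 1 / C else 0) + ∑ y ∈ univ.filter (fun y => x ⋖ y), 1 / f y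

/-- The birational order toggle `T_v`: it replaces the label at `v` by
`(∑_{y ∈ P̂, y ⋖ v} f(y)) / (f(v) · ∑_{y ∈ P̂, y ⋗ v} 1/f(y))` (with `f(0̂) = 1`,
`f(1̂) = C`) and fixes all other labels. -/
noncomputable def otog (C : ℝ) (v : P) (f : P → ℝ) : P → ℝ :=
  fun x => if x = v then lowSum f v / (f v * upInvSum C f v) else f x

/-- The birational complement map `Θ`: `(Θf)(x) = C / f(x)`. -/
noncomputable def thetaMap (C : ℝ) (f : P → ℝ) : P → ℝ := fun x => C / f x

/-- The birational down transfer `∇`: `(∇f)(x) = f(x) / ∑_{y ∈ P̂, y ⋖ x} f(y)` with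
`f(0̂) = 1`. -/
noncomputable def nablaMap (f : P → ℝ) : P → ℝ := fun x => f x / lowSum f x

/-- The birational inverse up transfer `Δ⁻¹`: `(Δ⁻¹f)(x)` is the sum, over all saturated
chains `x = y₁ ⋖ y₂ ⋖ ⋯ ⋖ y_k ⋖ 1̂` in `P̂` (i.e. saturated chains of `P` starting at `x`
and ending at a maximal element of `P`), of `f(y₁)f(y₂)⋯f(y_k)`. -/
noncomputable def deltaInvMap (f : P → ℝ) : P → ℝ := fun x =>
  ∑ k ∈ range (Fintype.card P),
    ∑ c ∈ univ.filter (fun c : Fin (k + 1) → P =>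
        SatChain c ∧ c 0 = x ∧ IsMax (c (Fin.last k))),
      (List.ofFn (f ∘ c)).prod

/-- `l` is a linear extension of `P`: it lists every element of `P` exactly once, and
`l[i] < l[j]` in `P` implies `i < j`. -/
def IsLinearExtension {P : Type*} [PartialOrder P] (l : List P) : Prop :=
  l.Nodup ∧ (∀ x : P, x ∈ l) ∧
    ∀ (i j : ℕ) (hi : i < l.length) (hj : j < l.length), l[i]'hi < l[j]'hj → i < j

/-- `l` is a linear extension of the subposet `A` of `P`. -/
def IsLinearExtensionOn {P : Type*} [PartialOrder P] (A : Set P) (l : List P) : Prop :=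
  l.Nodup ∧ (∀ x : P, x ∈ l ↔ x ∈ A) ∧
    ∀ (i j : ℕ) (hi : i < l.length) (hj : j < l.length), l[i]'hi < l[j]'hj → i < j

/-- Apply the antichain toggles `τ` along the list `l`, first element of `l` first; for a
linear extension `l = (x₁,…,xₙ)` this is `τ_{xₙ} ∘ ⋯ ∘ τ_{x₂} ∘ τ_{x₁}`, i.e. birational
antichain rowmotion `BAR`. -/
noncomputable def applyATogs (C : ℝ) (l : List P) (g : P → ℝ) : P → ℝ :=
  l.foldl (fun h v => atog C v h) g

/-- Apply the order toggles `T` along the list `l`, first element of `l` first. -/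
noncomputable def applyOTogs (C : ℝ) (l : List P) (f : P → ℝ) : P → ℝ :=
  l.foldl (fun h v => otog C v h) f

/-- `rk` is a rank function exhibiting `P` as a graded poset of rank `r`: minimal elements
have rank `0`, ranks increase by `1` along covers, and maximal elements have rank `r`. -/
def IsRankFunction {P : Type*} [PartialOrder P] (rk : P → ℕ) (r : ℕ) : Prop :=
  (∀ x : P, IsMin x → rk x = 0) ∧ (∀ x y : P, x ⋖ y → rk y = rk x + 1) ∧
    (∀ x : P, IsMax x → rk x = r)

/-- Birational order gyration `BOG`: apply the order rank toggles `ρT_j` of the even ranks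
first, then those of the odd ranks (the order within each parity class is immaterial,
since `ρT_i` and `ρT_j` commute when `|i - j| ≠ 1`).  Here `rl j` lists the rank-`j`
elements of the graded poset `P` of rank `r`. -/
noncomputable def BOGapp (C : ℝ) (rl : ℕ → List P) (r : ℕ) (f : P → ℝ) : P → ℝ :=
  ((List.range (r + 1)).filter (fun j => Odd j)).foldl (fun h j => applyOTogs C (rl j) h)
    (((List.range (r + 1)).filter (fun j => Even j)).foldl
      (fun h j => applyOTogs C (rl j) h) f)

/-- Birational antichain gyration `BAG`: apply the antichain rank toggles `ρτ_j` of the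
odd ranks from the bottom of the poset up, then those of the even ranks from the top
down. -/
noncomputable def BAGapp (C : ℝ) (rl : ℕ → List P) (r : ℕ) (g : P → ℝ) : P → ℝ :=
  (((List.range (r + 1)).filter (fun j => Even j)).reverse).foldl
    (fun h j => applyATogs C (rl j) h)
    (((List.range (r + 1)).filter (fun j => Odd j)).foldl
      (fun h j => applyATogs C (rl j) h) g)

/-!
Since `ΘΔ⁻¹` has inverse `ΔΘ`, where `Δ F x = F x / ∑_{y ⋗ x} F y` is the birational up transfer,
it suffices to show `BAG (ΔΘ f) = ΔΘ (BOG f)` for positive `f`.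

Order toggles at ranks of equal parity do not interact, so `BOG f = T_odd (T_even f)`, where `T_q`
toggles all elements of rank parity `q` simultaneously. Cutting the maximal chains through `v` at
`v` gives `Υ_v(g) = (∑_{y ⋖ v} ∇⁻¹g(y)) · g(v) · (∑_{y ⋗ v} Δ⁻¹g(y))`, so the antichain toggle at
`v` sees only `∇⁻¹` of the labeling below `v` and `Δ⁻¹` of it above `v`. With this, the odd ranks
of `BAG`, from the bottom up, turn `ΔΘ f` into `∇ (T_even f)` one rank at a time, and the even
ranks, from the top down, turn `∇ f'` into `ΔΘ (T_odd f')`. The labelings before and after each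
phase agree on the ranks it leaves alone, because toggling at `x` swaps `∇` and `ΔΘ` at `x`:
`∇ (T f) x = ΔΘ f x` and `ΔΘ (T f) x = ∇ f x`.
-/

theorem Fin.append_init_castLE {β : Type*} {m n : ℕ} {c₁ : Fin (m + 1) → β}
    {c₂ : Fin (n + 1) → β} (h : c₁ (Fin.last m) = c₂ 0) (i : Fin (m + 1)) :
    Fin.append (Fin.init c₁) c₂ (Fin.castLE (by omega) i) = c₁ i := by
  by_cases hi : (i : ℕ) < m
  · exact Fin.append_left (Fin.init c₁) c₂ ⟨i, hi⟩
  · obtain rfl : i = Fin.last m := Fin.ext (by simp; omega)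
    rw [h]
    exact Fin.append_right (Fin.init c₁) c₂ 0

theorem Fin.prod_castLE_mul_prod_natAdd {M : Type*} [CommMonoid M] {m n : ℕ}
    (g : Fin (m + (n + 1)) → M) :
    (∏ i : Fin (m + 1), g (Fin.castLE (by omega) i)) * ∏ i : Fin (n + 1), g (Fin.natAdd m i)
      = (∏ i, g i) * g (Fin.natAdd m 0) := by
  rw [Fin.prod_univ_castSucc, Fin.prod_univ_add (a := m) (b := n + 1) g, mul_right_comm]
  rfl

section SatChain

variable {α : Type*} [PartialOrder α]

theorem SatChain.strictMono {k : ℕ} {c : Fin (k + 1) → α} (hc : SatChain c) : StrictMono c :=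
  Fin.strictMono_iff_lt_succ.mpr fun i => (hc i).lt

theorem SatChain.card_le [Fintype α] {k : ℕ} {c : Fin (k + 1) → α} (hc : SatChain c) :
    k + 1 ≤ Fintype.card α := by
  simpa using Fintype.card_le_of_injective c hc.strictMono.injective

theorem SatChain.covBy_of_val_eq {k : ℕ} {c : Fin (k + 1) → α} (hc : SatChain c)
    {i j : Fin (k + 1)} (h : (j : ℕ) = i + 1) : c i ⋖ c j := by
  have := hc ⟨i, by omega⟩
  convert this using 2 <;> ext <;> simp [h]

theorem SatChain.comp {k m : ℕ} {c : Fin (k + 1) → α} (hc : SatChain c)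
    {e : Fin (m + 1) → Fin (k + 1)} (he : ∀ i : Fin m, (e i.succ : ℕ) = e i.castSucc + 1) :
    SatChain (c ∘ e) :=
  fun i => hc.covBy_of_val_eq (he i)

theorem satChain_cons_iff {k : ℕ} {x : α} {c : Fin (k + 1) → α} :
    SatChain (Fin.cons x c : Fin (k + 2) → α) ↔ x ⋖ c 0 ∧ SatChain c := by
  refine ⟨fun h => ⟨by simpa using h 0, fun i => by simpa using h i.succ⟩, fun h i => ?_⟩
  induction i using Fin.cases with
  | zero => simpa using h.1
  | succ j => simpa only [← Fin.succ_castSucc, Fin.cons_succ] using h.2 j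

theorem satChain_toDual_comp_rev_iff {k : ℕ} {c : Fin (k + 1) → α} :
    SatChain (fun i => OrderDual.toDual (c i.rev)) ↔ SatChain c := by
  refine ⟨fun hc i => ?_, fun hc i => ?_⟩ <;> simpa [Fin.rev_succ, Fin.rev_castSucc] using hc i.rev

theorem SatChain.append_init {m n : ℕ} {c₁ : Fin (m + 1) → α} {c₂ : Fin (n + 1) → α}
    (h₁ : SatChain c₁) (h₂ : SatChain c₂) (h : c₁ (Fin.last m) = c₂ 0) :
    SatChain (k := m + n) (Fin.append (Fin.init c₁) c₂ : Fin (m + (n + 1)) → α) := by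
  rintro ⟨i, hi⟩
  rcases lt_or_ge i m with him | him
  · have e := Fin.append_init_castLE h
    exact (e ⟨i, by omega⟩).symm ▸ (e ⟨i + 1, by omega⟩).symm ▸ h₁ ⟨i, him⟩
  · obtain ⟨j, rfl⟩ := Nat.exists_eq_add_of_le him
    have e := Fin.append_right (Fin.init c₁) c₂
    exact (e ⟨j, by omega⟩).symm ▸ (e ⟨j + 1, by omega⟩).symm ▸ h₂ ⟨j, by omega⟩

theorem IsRankFunction.apply_satChain {rk : α → ℕ} {r : ℕ} (hrk : IsRankFunction rk r) {k : ℕ}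
    {c : Fin (k + 1) → α} (hc : SatChain c) (i : Fin (k + 1)) : rk (c i) = rk (c 0) + i := by
  induction i using Fin.induction with
  | zero => rfl
  | succ i ih => rw [hrk.2.1 _ _ (hc i), ih, Fin.val_succ, Fin.val_castSucc, add_assoc]

theorem IsRankFunction.apply_maxChain {rk : α → ℕ} {r : ℕ} (hrk : IsRankFunction rk r) {k : ℕ}
    {c : Fin (k + 1) → α} (hc : MaxChain c) (i : Fin (k + 1)) : rk (c i) = i := by
  rw [hrk.apply_satChain hc.1, hrk.1 _ hc.2.1, zero_add]

end SatChain

section ChainSums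

noncomputable def upSum (F : P → ℝ) (x : P) : ℝ :=
  (if IsMax x then 1 else 0) + ∑ y ∈ univ.filter (fun y => x ⋖ y), F y

noncomputable def deltaMap (F : P → ℝ) (x : P) : ℝ := F x / upSum F x

noncomputable def nablaInvMap (f : P → ℝ) (x : P) : ℝ :=
  ∑ k ∈ range (Fintype.card P),
    ∑ c ∈ univ.filter (fun c : Fin (k + 1) → P => SatChain c ∧ IsMin (c 0) ∧ c (Fin.last k) = x),
      (List.ofFn (f ∘ c)).prod

noncomputable def upChainSum (f : P → ℝ) (k : ℕ) (x : P) : ℝ :=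
  ∑ c ∈ univ.filter (fun c : Fin (k + 1) → P => SatChain c ∧ c 0 = x ∧ IsMax (c (Fin.last k))),
    (List.ofFn (f ∘ c)).prod

variable {C : ℝ} {f f' F F' : P → ℝ} {x : P}

theorem lowSum_congr (h : ∀ y, y ⋖ x → F y = F' y) : lowSum F x = lowSum F' x := by
  rw [lowSum, lowSum, sum_congr rfl fun y hy => h y (mem_filter.1 hy).2]

theorem upSum_congr (h : ∀ y, x ⋖ y → F y = F' y) : upSum F x = upSum F' x := by
  rw [upSum, upSum, sum_congr rfl fun y hy => h y (mem_filter.1 hy).2]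

theorem upInvSum_congr (h : ∀ y, x ⋖ y → F y = F' y) : upInvSum C F x = upInvSum C F' x := by
  rw [upInvSum, upInvSum, sum_congr rfl fun y hy => by rw [h y (mem_filter.1 hy).2]]

theorem Upsilon_congr (h : ∀ y, y ≤ x ∨ x ≤ y → f y = f' y) : Upsilon f x = Upsilon f' x :=
  sum_congr rfl fun k _ => sum_congr rfl fun c hc => by
    obtain ⟨⟨hs, -⟩, j, rfl⟩ := (mem_filter.1 hc).2
    congr 2
    exact funext fun i =>
      h _ ((le_total i j).imp (hs.strictMono.monotone ·) (hs.strictMono.monotone ·))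

theorem deltaInvMap_congr (h : ∀ y, x ≤ y → f y = f' y) : deltaInvMap f x = deltaInvMap f' x := by
  refine sum_congr rfl fun k _ => sum_congr rfl fun c hc => ?_
  obtain ⟨hs, h0, -⟩ := (mem_filter.1 hc).2
  congr 2
  exact funext fun i => h _ (h0 ▸ hs.strictMono.monotone (Fin.zero_le i))

theorem upChainSum_zero (f : P → ℝ) (x : P) :
    upChainSum f 0 x = if IsMax x then f x else 0 := by
  rw [upChainSum, sum_filter, ← (Equiv.funUnique (Fin 1) P).symm.sum_comp]
  simp [SatChain, Fin.last, ite_and]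

theorem upChainSum_succ (f : P → ℝ) (k : ℕ) (x : P) :
    upChainSum f (k + 1) x = f x * ∑ y ∈ univ.filter (fun y => x ⋖ y), upChainSum f k y := by
  simp only [upChainSum]
  rw [sum_comm' (s' := fun c => {c 0})
    (t' := univ.filter fun c : Fin (k + 1) → P => SatChain c ∧ x ⋖ c 0 ∧ IsMax (c (Fin.last k)))
    (by intro y c; simp only [mem_filter, mem_univ, true_and, mem_singleton]; grind)]
  simp only [sum_singleton, mul_sum]
  refine sum_nbij' Fin.tail (fun c => (Fin.cons x c : Fin (k + 2) → P)) (fun c hc => ?_)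
    (fun c hc => ?_) (fun c hc => ?_) (fun c _ => Fin.tail_cons _ _) (fun c hc => ?_) <;>
    simp only [mem_filter, mem_univ, true_and] at hc ⊢
  · obtain ⟨hs, h0, hm⟩ := hc
    rw [← Fin.cons_self_tail c, satChain_cons_iff, h0] at hs
    exact ⟨hs.2, hs.1, by rwa [Fin.tail, Fin.succ_last]⟩
  · exact ⟨satChain_cons_iff.2 ⟨hc.2.1, hc.1⟩, rfl,
      by rw [← Fin.succ_last, Fin.cons_succ]; exact hc.2.2⟩
  · rw [← hc.2.1, Fin.cons_self_tail]
  · conv_lhs => rw [← Fin.cons_self_tail c, hc.2.1]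
    simp [Fin.comp_cons]

theorem upChainSum_eq_zero_of_card_le (f : P → ℝ) {k : ℕ} (hk : Fintype.card P ≤ k) (x : P) :
    upChainSum f k x = 0 :=
  sum_eq_zero fun c hc => absurd (mem_filter.1 hc).2.1.card_le (by omega)

theorem deltaInvMap_eq_mul_upSum (f : P → ℝ) (x : P) :
    deltaInvMap f x = f x * upSum (deltaInvMap f) x := by
  have hlong : ∀ y, deltaInvMap f y = ∑ k ∈ range (Fintype.card P + 1), upChainSum f k y :=
    fun y => by rw [sum_range_succ, upChainSum_eq_zero_of_card_le f le_rfl, add_zero]; rfl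
  rw [hlong, sum_range_succ', upChainSum_zero]
  simp only [upChainSum_succ, upSum, ← mul_sum, mul_add, mul_ite, mul_one, mul_zero]
  rw [sum_comm, add_comm]
  rfl

open OrderDual in
theorem nablaInvMap_eq_deltaInvMap_toDual (f : P → ℝ) (x : P) :
    nablaInvMap f x = deltaInvMap (P := Pᵒᵈ) (f ∘ ofDual) (toDual x) := by
  refine sum_congr rfl fun k _ => ?_
  refine sum_nbij' (fun c i => toDual (c i.rev)) (fun c i => ofDual (c i.rev))
    (fun c hc => ?_) (fun c hc => ?_) (fun c _ => by simp) (fun c _ => by simp) (fun c _ => ?_)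
  · simp only [mem_filter, mem_univ, true_and] at hc ⊢
    simpa [satChain_toDual_comp_rev_iff, and_comm] using hc
  · simp only [mem_filter, mem_univ, true_and] at hc ⊢
    rw [← satChain_toDual_comp_rev_iff]
    simp only [Fin.rev_rev, toDual_ofDual, Fin.rev_zero, Fin.rev_last]
    exact ⟨hc.1, hc.2.2, by rw [hc.2.1]; rfl⟩
  · simp only [List.prod_ofFn, Function.comp_apply, ofDual_toDual]
    exact (Equiv.prod_comp Fin.revPerm fun i => f (c i)).symm

open OrderDual in
theorem upSum_toDual (F : Pᵒᵈ → ℝ) (x : P) : upSum F (toDual x) = lowSum (F ∘ toDual) x := by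
  simp only [upSum, lowSum, isMax_toDual_iff]
  congr 1
  exact sum_equiv ofDual (fun y => by simp [← toDual_covBy_toDual_iff (a := ofDual y)])
    fun _ _ => rfl

theorem nablaInvMap_eq_lowSum_mul (f : P → ℝ) (x : P) :
    nablaInvMap f x = lowSum (nablaInvMap f) x * f x := by
  rw [nablaInvMap_eq_deltaInvMap_toDual, deltaInvMap_eq_mul_upSum, upSum_toDual, mul_comm]
  congr 2
  exact funext fun y => (nablaInvMap_eq_deltaInvMap_toDual f y).symm

theorem nablaInvMap_congr (h : ∀ y, y ≤ x → f y = f' y) : nablaInvMap f x = nablaInvMap f' x := by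
  simp only [nablaInvMap_eq_deltaInvMap_toDual]
  exact deltaInvMap_congr fun y hy => h _ hy

end ChainSums

section Transfers

variable {C : ℝ} {f F : P → ℝ}

theorem lowSum_pos {x : P} (hF : ∀ y, y ⋖ x → 0 < F y) : 0 < lowSum F x := by
  rw [lowSum]
  by_cases hx : IsMin x
  · rw [if_pos hx]
    exact add_pos_of_pos_of_nonneg one_pos (sum_nonneg fun y hy => (hF y (mem_filter.1 hy).2).le)
  · obtain ⟨y, hy⟩ := exists_covBy_of_wellFoundedGT hx
    rw [if_neg hx, zero_add]
    exact sum_pos (fun y hy => hF y (mem_filter.1 hy).2) ⟨y, mem_filter.2 ⟨mem_univ y, hy⟩⟩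

theorem upSum_pos {x : P} (hF : ∀ y, x ⋖ y → 0 < F y) : 0 < upSum F x := by
  rw [upSum]
  by_cases hx : IsMax x
  · rw [if_pos hx]
    exact add_pos_of_pos_of_nonneg one_pos (sum_nonneg fun y hy => (hF y (mem_filter.1 hy).2).le)
  · obtain ⟨y, hy⟩ := exists_covBy_of_wellFoundedLT hx
    rw [if_neg hx, zero_add]
    exact sum_pos (fun y hy => hF y (mem_filter.1 hy).2) ⟨y, mem_filter.2 ⟨mem_univ y, hy⟩⟩

theorem thetaMap_pos {α : Type*} {f : α → ℝ} (hC : 0 < C) (hf : ∀ y, 0 < f y) (x : α) :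
    0 < thetaMap C f x :=
  div_pos hC (hf x)

theorem nablaMap_pos (hf : ∀ y, 0 < f y) (x : P) : 0 < nablaMap f x :=
  div_pos (hf x) (lowSum_pos fun y _ => hf y)

theorem deltaMap_thetaMap_pos (hC : 0 < C) (hf : ∀ y, 0 < f y) (x : P) :
    0 < deltaMap (thetaMap C f) x :=
  div_pos (thetaMap_pos hC hf x) (upSum_pos fun y _ => thetaMap_pos hC hf y)

theorem deltaInvMap_pos (hf : ∀ y, 0 < f y) (x : P) : 0 < deltaInvMap f x := by
  induction x using WellFoundedGT.induction with
  | _ x ih =>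
    rw [deltaInvMap_eq_mul_upSum]
    exact mul_pos (hf x) (upSum_pos fun y hy => ih y hy.lt)

theorem deltaInvMap_deltaMap (hF : ∀ y, 0 < F y) : deltaInvMap (deltaMap F) = F := by
  funext x
  induction x using WellFoundedGT.induction with
  | _ x ih =>
    rw [deltaInvMap_eq_mul_upSum, upSum_congr fun y hy => ih y hy.lt, deltaMap,
      div_mul_cancel₀ _ (upSum_pos fun y _ => hF y).ne']

theorem nablaInvMap_nablaMap (hF : ∀ y, 0 < F y) : nablaInvMap (nablaMap F) = F := by
  funext x
  induction x using WellFoundedLT.induction with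
  | _ x ih =>
    rw [nablaInvMap_eq_lowSum_mul, lowSum_congr fun y hy => ih y hy.lt, nablaMap,
      mul_div_cancel₀ _ (lowSum_pos fun y _ => hF y).ne']

theorem deltaMap_deltaInvMap (hf : ∀ y, 0 < f y) : deltaMap (deltaInvMap f) = f := by
  funext x
  rw [deltaMap, deltaInvMap_eq_mul_upSum f x,
    mul_div_cancel_right₀ _ (upSum_pos fun y _ => deltaInvMap_pos hf y).ne']

theorem thetaMap_thetaMap {α : Type*} (hC : C ≠ 0) (f : α → ℝ) : thetaMap C (thetaMap C f) = f :=
  funext fun _ => div_div_cancel₀ hC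

theorem upSum_thetaMap (hC : C ≠ 0) (x : P) : upSum (thetaMap C f) x = C * upInvSum C f x := by
  simp only [upSum, upInvSum, thetaMap, mul_add, mul_sum, mul_ite, mul_one_div, mul_zero,
    div_self hC]

theorem lowSum_div_mul_upInvSum (hC : C ≠ 0) (x : P) :
    lowSum f x / (f x * upInvSum C f x) = lowSum f x * deltaMap (thetaMap C f) x := by
  rw [deltaMap, upSum_thetaMap hC, thetaMap, div_div, mul_left_comm, div_mul_cancel_left₀ hC,
    div_eq_mul_inv]

end Transfers

section Graded

variable {rk : P → ℕ} {r : ℕ}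

theorem IsRankFunction.strictMono (hrk : IsRankFunction rk r) : StrictMono rk := by
  intro x y hxy
  induction y using WellFoundedLT.induction with
  | _ y ih =>
    obtain ⟨z, hxz, hzy⟩ := exists_le_covBy_of_lt hxy
    rw [hrk.2.1 z y hzy]
    rcases hxz.eq_or_lt with rfl | hxz
    · omega
    · exact (ih z hzy.lt hxz).trans (Nat.lt_succ_self _)

theorem IsRankFunction.le (hrk : IsRankFunction rk r) (x : P) : rk x ≤ r := by
  induction x using WellFoundedGT.induction with
  | _ x ih =>
    by_cases hx : IsMax x
    · exact (hrk.2.2 x hx).le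
    · obtain ⟨y, hy⟩ := exists_covBy_of_wellFoundedLT hx
      have := ih y hy.lt
      rw [hrk.2.1 x y hy] at this
      omega

theorem IsRankFunction.ne_of_comparable (hrk : IsRankFunction rk r) {v w y : P} (hvw : v ≠ w)
    (h : rk v = rk w) (hy : y ≤ w ∨ w ≤ y) : y ≠ v := by
  rintro rfl
  refine hvw (hy.elim (fun h' => h'.eq_of_not_lt ?_) fun h' => (h'.eq_of_not_lt ?_).symm) <;>
    exact fun hlt => (hrk.strictMono hlt).ne (by omega)

theorem sum_chainLengths_eq_single {Q : ∀ k, (Fin (k + 1) → P) → Prop}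
    [∀ k, DecidablePred (Q k)] (F : ∀ k, (Fin (k + 1) → P) → ℝ) {k₀ : ℕ}
    (hQ : ∀ k c, Q k c → SatChain c ∧ k = k₀) :
    ∑ k ∈ range (Fintype.card P), ∑ c ∈ univ.filter (Q k), F k c
      = ∑ c ∈ univ.filter (Q k₀), F k₀ c := by
  have hzero : ∀ k ≠ k₀, ∑ c ∈ univ.filter (Q k), F k c = 0 :=
    fun k hk => sum_eq_zero fun c hc => absurd (hQ k c (mem_filter.1 hc).2).2 hk
  by_cases hk₀ : k₀ < Fintype.card P
  · exact sum_eq_single_of_mem k₀ (mem_range.2 hk₀) fun k _ hk => hzero k hk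
  · rw [sum_eq_zero fun k hk => hzero k (by rw [mem_range] at hk; omega)]
    exact (sum_eq_zero fun c hc => absurd (hQ _ c (mem_filter.1 hc).2).1.card_le (by omega)).symm

variable (hrk : IsRankFunction rk r)
include hrk

theorem deltaInvMap_eq_upChainSum (f : P → ℝ) {x : P} {p : ℕ} (hp : rk x + p = r) :
    deltaInvMap f x = upChainSum f p x :=
  sum_chainLengths_eq_single _ fun k c ⟨hs, h0, hmax⟩ => ⟨hs, by
    have := hrk.apply_satChain hs (Fin.last k)
    rw [hrk.2.2 _ hmax, h0, Fin.val_last] at this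
    omega⟩

theorem nablaInvMap_eq_sum (f : P → ℝ) (x : P) :
    nablaInvMap f x = ∑ c ∈ univ.filter (fun c : Fin (rk x + 1) → P =>
      SatChain c ∧ IsMin (c 0) ∧ c (Fin.last (rk x)) = x), (List.ofFn (f ∘ c)).prod :=
  sum_chainLengths_eq_single _ fun k c ⟨hs, hmin, hlast⟩ => ⟨hs, by
    have := hrk.apply_satChain hs (Fin.last k)
    rw [hrk.1 _ hmin, hlast, Fin.val_last] at this
    omega⟩

theorem Upsilon_eq_sum (f : P → ℝ) (v : P) :
    Upsilon f v = ∑ c ∈ univ.filter (fun c : Fin (r + 1) → P => MaxChain c ∧ ∃ j, c j = v),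
      (List.ofFn (f ∘ c)).prod :=
  sum_chainLengths_eq_single _ fun k c ⟨hc, _⟩ => ⟨hc.1, by
    simpa [hrk.2.2 _ hc.2.2] using (hrk.apply_maxChain hc (Fin.last k)).symm⟩

theorem Upsilon_mul_eq_nablaInvMap_mul_deltaInvMap (f : P → ℝ) (v : P) :
    Upsilon f v * f v = nablaInvMap f v * deltaInvMap f v := by
  obtain ⟨p, rfl⟩ := Nat.exists_eq_add_of_le (hrk.le v)
  rw [Upsilon_eq_sum hrk, nablaInvMap_eq_sum hrk, deltaInvMap_eq_upChainSum hrk f rfl, upChainSum,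
    sum_mul, sum_mul_sum, ← sum_product']
  have hv : ∀ {c : Fin (rk v + p + 1) → P}, MaxChain c → (∃ j, c j = v) → c ⟨rk v, by omega⟩ = v :=
    fun hc ⟨j, hj⟩ => (congrArg _ (Fin.ext (by rw [← hrk.apply_maxChain hc j, hj]))).trans hj
  -- a maximal chain through `v` passes it at index `rk v`; cut it there
  refine sum_nbij'
    (fun c => (fun i => c (Fin.castLE (by omega) i), fun i => c (Fin.natAdd (rk v) i)))
    (fun cc => (Fin.append (Fin.init cc.1) cc.2 : Fin (rk v + (p + 1)) → P))
    (fun c hc => ?_) (fun cc hcc => ?_) (fun c _ => Fin.append_castAdd_natAdd)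
    (fun cc hcc => ?_) (fun c hc => ?_)
  · simp only [mem_filter, mem_univ, true_and, mem_product] at hc ⊢
    exact ⟨⟨hc.1.1.comp fun i => rfl, hc.1.2.1, hv hc.1 hc.2⟩, hc.1.1.comp fun i => rfl,
      hv hc.1 hc.2, hc.1.2.2⟩
  · simp only [mem_filter, mem_univ, true_and, mem_product] at hcc ⊢
    obtain ⟨⟨hs₁, hmin, hv₁⟩, hs₂, hv₂, hmax⟩ := hcc
    have e := Fin.append_init_castLE (hv₁.trans hv₂.symm)
    exact ⟨⟨hs₁.append_init hs₂ (hv₁.trans hv₂.symm), (e 0).symm ▸ hmin,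
      (Fin.append_right (Fin.init cc.1) cc.2 (Fin.last p)).symm ▸ hmax⟩,
      Fin.castLE (by omega) (Fin.last (rk v)), (e _).trans hv₁⟩
  · simp only [mem_filter, mem_univ, true_and, mem_product] at hcc
    exact Prod.ext (funext (Fin.append_init_castLE (hcc.1.2.2.trans hcc.2.2.1.symm)))
      (funext (Fin.append_right _ _))
  · simp only [mem_filter, mem_univ, true_and] at hc
    simp only [List.prod_ofFn, Function.comp_apply]
    rw [Fin.prod_castLE_mul_prod_natAdd (m := rk v) (n := p) (fun i => f (c i))]
    exact congrArg _ (congrArg f (hv hc.1 hc.2)).symm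

theorem Upsilon_eq_lowSum_mul_deltaInvMap {s : P → ℝ} {x : P} (hs : s x ≠ 0) :
    Upsilon s x = lowSum (nablaInvMap s) x * deltaInvMap s x :=
  mul_right_cancel₀ hs <| by
    rw [Upsilon_mul_eq_nablaInvMap_mul_deltaInvMap hrk, nablaInvMap_eq_lowSum_mul]
    ring

theorem Upsilon_eq_nablaInvMap_mul_upSum {s : P → ℝ} {x : P} (hs : s x ≠ 0) :
    Upsilon s x = nablaInvMap s x * upSum (deltaInvMap s) x :=
  mul_right_cancel₀ hs <| by
    rw [Upsilon_mul_eq_nablaInvMap_mul_deltaInvMap hrk, deltaInvMap_eq_mul_upSum s x]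
    ring

end Graded

section Folds

theorem List.foldl_pointUpdates_eq {α β : Type*} (T : α → (α → β) → β) {l : List α}
    (hl : l.Nodup)
    (hT : ∀ v ∈ l, ∀ w ∈ l, v ≠ w → ∀ s s' : α → β, (∀ y, y ≠ v → s y = s' y) → T w s = T w s')
    (s : α → β) :
    l.foldl (fun s v x => if x = v then T v s else s x) s
      = fun x => if x ∈ l then T x s else s x := by
  induction l generalizing s with
  | nil => rfl
  | cons v t ih =>
    rw [List.foldl_cons, ih (List.nodup_cons.1 hl).2
      (fun v hv w hw => hT v (List.mem_cons_of_mem _ hv) w (List.mem_cons_of_mem _ hw))]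
    funext x
    by_cases hxt : x ∈ t
    · have hxv : x ≠ v := fun h => (List.nodup_cons.1 hl).1 (h ▸ hxt)
      simp only [hxt, if_true, List.mem_cons, or_true]
      exact hT v List.mem_cons_self x (List.mem_cons_of_mem _ hxt) hxv.symm _ _
        fun y hy => if_neg hy
    · by_cases hxv : x = v
      · subst hxv
        simp [hxt]
      · simp [hxt, hxv]

theorem List.foldl_rankUpdate_eq {α β : Type*} (rk : α → ℕ) (T : (α → β) → α → β)
    (old new : α → β) (l : List ℕ)
    (hT : ∀ l₁ j l₂, l = l₁ ++ j :: l₂ → ∀ x, rk x = j →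
      T (fun y => if rk y ∈ l₁ then new y else old y) x = new x) :
    l.foldl (fun s j x => if rk x = j then T s x else s x) old
      = fun x => if rk x ∈ l then new x else old x := by
  induction l using List.reverseRecOn with
  | nil => simp
  | append_singleton l j ih =>
    rw [List.foldl_append, ih fun l₁ j' l₂ h => hT l₁ j' (l₂ ++ [j]) (by simp [h])]
    funext x
    by_cases hx : rk x = j
    · simp [hx, hT l j [] rfl x hx]
    · simp [hx]

theorem List.Pairwise.mem_iff_of_eq_append_cons {α : Type*} {R : α → α → Prop}
    (hR : ∀ a b, R a b → ¬ R b a) {l l₁ l₂ : List α} {j : α} (hl : l.Pairwise R)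
    (h : l = l₁ ++ j :: l₂) (i : α) : i ∈ l₁ ↔ i ∈ l ∧ R i j := by
  subst h
  obtain ⟨-, hr, hlr⟩ := List.pairwise_append.1 hl
  refine ⟨fun hi => ⟨List.mem_append_left _ hi, hlr i hi j List.mem_cons_self⟩, ?_⟩
  rintro ⟨hi, hij⟩
  rcases List.mem_append.1 hi with hi | hi
  · exact hi
  rcases List.mem_cons.1 hi with rfl | hi
  · exact absurd hij (hR _ _ hij)
  · exact absurd hij (hR _ _ ((List.pairwise_cons.1 hr).1 i hi))

theorem List.of_filter_range_eq_append_cons {q : ℕ → Prop} [DecidablePred q] {n j : ℕ}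
    {l₁ l₂ : List ℕ} (h : (List.range n).filter (fun i => q i) = l₁ ++ j :: l₂) :
    q j ∧ ∀ i, i ∈ l₁ ↔ q i ∧ i < j := by
  have hmem := (List.pairwise_lt_range.filter _).mem_iff_of_eq_append_cons
    (fun _ _ => lt_asymm) h
  have hj := h ▸ List.mem_append_right l₁ List.mem_cons_self
  simp only [List.mem_filter, List.mem_range, decide_eq_true_eq] at hmem hj
  exact ⟨hj.2, fun i => (hmem i).trans
    ⟨fun hi => ⟨hi.1.2, hi.2⟩, fun hi => ⟨⟨hi.2.trans hj.1, hi.1⟩, hi.2⟩⟩⟩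

theorem List.of_reverse_filter_range_eq_append_cons {q : ℕ → Prop} [DecidablePred q] {n j : ℕ}
    {l₁ l₂ : List ℕ} (h : ((List.range n).filter (fun i => q i)).reverse = l₁ ++ j :: l₂) :
    q j ∧ ∀ i, i ∈ l₁ ↔ q i ∧ j < i ∧ i < n := by
  have hmem := (List.pairwise_reverse.2 (List.pairwise_lt_range.filter _)).mem_iff_of_eq_append_cons
    (fun _ _ => lt_asymm) h
  have hj := List.mem_reverse.1 (h ▸ List.mem_append_right l₁ List.mem_cons_self)
  simp only [List.mem_reverse, List.mem_filter, List.mem_range, decide_eq_true_eq] at hmem hj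
  exact ⟨hj.2, fun i => by rw [hmem]; tauto⟩

end Folds

section RankToggles

variable {rk : P → ℕ} {r : ℕ} (hrk : IsRankFunction rk r) {rl : ℕ → List P}
  (hrl : ∀ j, (rl j).Nodup ∧ ∀ x : P, x ∈ rl j ↔ rk x = j) (C : ℝ)
include hrk hrl

theorem applyATogs_rankList_eq (j : ℕ) (s : P → ℝ) :
    applyATogs C (rl j) s = fun x => if rk x = j then C / Upsilon s x else s x := by
  have := List.foldl_pointUpdates_eq (fun v s => C / Upsilon s v) (hrl j).1
    (fun v hv w hw hvw s s' hs => by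
      rw [(hrl j).2] at hv hw
      exact congrArg (C / ·) <| Upsilon_congr fun y hy =>
        hs y (hrk.ne_of_comparable hvw (hv.trans hw.symm) hy)) s
  simp only [(hrl j).2] at this
  exact this

theorem applyOTogs_rankList_eq (j : ℕ) (s : P → ℝ) :
    applyOTogs C (rl j) s
      = fun x => if rk x = j then lowSum s x / (s x * upInvSum C s x) else s x := by
  have := List.foldl_pointUpdates_eq (fun v s => lowSum s v / (s v * upInvSum C s v)) (hrl j).1
    (fun v hv w hw hvw s s' hs => by
      rw [(hrl j).2] at hv hw
      have hne := fun y => hrk.ne_of_comparable (y := y) hvw (hv.trans hw.symm)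
      rw [lowSum_congr fun y hy => hs y (hne y (.inl hy.le)), hs w (hne w (.inl le_rfl)),
        upInvSum_congr fun y hy => hs y (hne y (.inr hy.le))]) s
  simp only [(hrl j).2] at this
  exact this

end RankToggles

noncomputable def parityToggle (C : ℝ) (rk : P → ℕ) (q : ℕ → Prop) (f : P → ℝ) : P → ℝ :=
  fun x => if q (rk x) then lowSum f x / (f x * upInvSum C f x) else f x

section ParityToggle

variable {C : ℝ} {rk : P → ℕ} {r : ℕ} {q : ℕ → Prop} {f : P → ℝ}

theorem parityToggle_pos (hC : 0 < C) (hf : ∀ y, 0 < f y) (x : P) :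
    0 < parityToggle C rk q f x := by
  unfold parityToggle
  split_ifs
  · rw [lowSum_div_mul_upInvSum hC.ne']
    exact mul_pos (lowSum_pos fun y _ => hf y) (deltaMap_thetaMap_pos hC hf x)
  · exact hf x

variable (hrk : IsRankFunction rk r) (hq : ∀ i, q (i + 1) ↔ ¬ q i)
include hrk hq

theorem parityToggle_apply_of_covBy {x y : P} (hx : q (rk x)) (hxy : y ⋖ x ∨ x ⋖ y) :
    parityToggle C rk q f y = f y := by
  refine if_neg ?_
  rcases hxy with h | h
  · rwa [hrk.2.1 _ _ h, hq] at hx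
  · rw [hrk.2.1 _ _ h, hq]
    exact not_not_intro hx

theorem nablaMap_parityToggle (hC : 0 < C) (hf : ∀ y, 0 < f y) {x : P} (hx : q (rk x)) :
    nablaMap (parityToggle C rk q f) x = deltaMap (thetaMap C f) x := by
  rw [nablaMap, lowSum_congr fun y hy => parityToggle_apply_of_covBy hrk hq hx (.inl hy),
    parityToggle, if_pos hx, lowSum_div_mul_upInvSum hC.ne',
    mul_div_cancel_left₀ _ (lowSum_pos fun y _ => hf y).ne']

theorem deltaMap_thetaMap_parityToggle (hC : 0 < C) (hf : ∀ y, 0 < f y) {x : P}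
    (hx : q (rk x)) : deltaMap (thetaMap C (parityToggle C rk q f)) x = nablaMap f x := by
  have hup : upSum (thetaMap C (parityToggle C rk q f)) x = upSum (thetaMap C f) x :=
    upSum_congr fun y hy => congrArg (C / ·) (parityToggle_apply_of_covBy hrk hq hx (.inr hy))
  have hL : lowSum f x ≠ 0 := (lowSum_pos fun y _ => hf y).ne'
  have hU : upSum (thetaMap C f) x ≠ 0 := (upSum_pos fun y _ => thetaMap_pos hC hf y).ne'
  rw [deltaMap, hup, thetaMap, parityToggle, if_pos hx, lowSum_div_mul_upInvSum hC.ne', deltaMap,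
    thetaMap, nablaMap]
  field_simp [hC.ne', (hf x).ne']

end ParityToggle

section AntichainToggleSteps

variable {C : ℝ} {rk : P → ℕ} {r : ℕ} (hrk : IsRankFunction rk r) (hC : 0 < C) {s : P → ℝ}
  {x : P}
include hrk hC

theorem div_Upsilon_eq_nablaMap {f f₁ : P → ℝ} (hf : ∀ y, 0 < f y) (hf₁ : ∀ y, 0 < f₁ y)
    (hx : f₁ x = f x) (hlow : ∀ y, rk y < rk x → s y = nablaMap f₁ y)
    (hup : ∀ y, rk x ≤ rk y → s y = deltaMap (thetaMap C f) y) :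
    C / Upsilon s x = nablaMap f₁ x := by
  have hsx : s x ≠ 0 := (hup x le_rfl).symm ▸ (deltaMap_thetaMap_pos hC hf x).ne'
  have hbelow : lowSum (nablaInvMap s) x = lowSum f₁ x := lowSum_congr fun y hy =>
    (nablaInvMap_congr fun z hz =>
      hlow z ((hrk.strictMono.monotone hz).trans_lt (hrk.strictMono hy.lt))).trans
      (congrFun (nablaInvMap_nablaMap hf₁) y)
  have habove : deltaInvMap s x = thetaMap C f x :=
    (deltaInvMap_congr fun z hz => hup z (hrk.strictMono.monotone hz)).trans
      (congrFun (deltaInvMap_deltaMap (thetaMap_pos hC hf)) x)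
  rw [Upsilon_eq_lowSum_mul_deltaInvMap hrk hsx, hbelow, habove, nablaMap, hx, thetaMap]
  field_simp

theorem div_Upsilon_eq_deltaMap_thetaMap {f f₂ : P → ℝ} (hf : ∀ y, 0 < f y)
    (hf₂ : ∀ y, 0 < f₂ y) (hx : f₂ x = f x) (hlow : ∀ y, rk y ≤ rk x → s y = nablaMap f y)
    (hup : ∀ y, rk x < rk y → s y = deltaMap (thetaMap C f₂) y) :
    C / Upsilon s x = deltaMap (thetaMap C f₂) x := by
  have hsx : s x ≠ 0 := (hlow x le_rfl).symm ▸ (nablaMap_pos hf x).ne'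
  have hbelow : nablaInvMap s x = f x :=
    (nablaInvMap_congr fun z hz => hlow z (hrk.strictMono.monotone hz)).trans
      (congrFun (nablaInvMap_nablaMap hf) x)
  have habove : upSum (deltaInvMap s) x = upSum (thetaMap C f₂) x := upSum_congr fun y hy =>
    (deltaInvMap_congr fun z hz =>
      hup z ((hrk.strictMono hy.lt).trans_le (hrk.strictMono.monotone hz))).trans
      (congrFun (deltaInvMap_deltaMap (thetaMap_pos hC hf₂)) y)
  rw [Upsilon_eq_nablaInvMap_mul_upSum hrk hsx, hbelow, habove, deltaMap,
    show thetaMap C f₂ x = C / f x from congrArg (C / ·) hx, div_div]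

end AntichainToggleSteps

section Gyration

variable {C : ℝ} {rk : P → ℕ} {r : ℕ} (hrk : IsRankFunction rk r) {rl : ℕ → List P}
  (hrl : ∀ j, (rl j).Nodup ∧ ∀ x : P, x ∈ rl j ↔ rk x = j)
include hrk hrl

theorem foldl_applyOTogs_eq_parityToggle {q : ℕ → Prop} [DecidablePred q]
    (hq : ∀ i, q (i + 1) ↔ ¬ q i) (f : P → ℝ) :
    ((List.range (r + 1)).filter (fun j => q j)).foldl (fun h j => applyOTogs C (rl j) h) f
      = parityToggle C rk q f := by
  simp only [applyOTogs_rankList_eq hrk hrl]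
  rw [List.foldl_rankUpdate_eq rk _ f (fun x => lowSum f x / (f x * upInvSum C f x)) _ ?_]
  · funext x
    simp [parityToggle, Nat.lt_succ_iff.2 (hrk.le x)]
  intro l₁ j l₂ hl x hxj
  obtain ⟨hj, hmem⟩ := List.of_filter_range_eq_append_cons hl
  set s : P → ℝ := fun y => if rk y ∈ l₁ then lowSum f y / (f y * upInvSum C f y) else f y
  have hfix : ∀ y, y ⋖ x ∨ x ⋖ y ∨ y = x → s y = f y := by
    refine fun y hy => if_neg fun hy₁ => ?_
    obtain ⟨hqy, hlt⟩ := (hmem _).1 hy₁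
    rcases hy with hy | hy | rfl
    · rw [← hxj, hrk.2.1 _ _ hy, hq] at hj
      exact hj hqy
    · have := hrk.2.1 _ _ hy
      omega
    · omega
  rw [lowSum_congr fun y hy => hfix y (.inl hy), hfix x (.inr (.inr rfl)),
    upInvSum_congr fun y hy => hfix y (.inr (.inl hy))]

theorem BOGapp_eq_parityToggle (f : P → ℝ) :
    BOGapp C rl r f = parityToggle C rk Odd (parityToggle C rk Even f) := by
  rw [BOGapp, foldl_applyOTogs_eq_parityToggle hrk hrl fun _ => Nat.even_add_one,
    foldl_applyOTogs_eq_parityToggle hrk hrl fun _ => Nat.odd_add_one]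

theorem foldl_applyATogs_odd_eq (hC : 0 < C) {f : P → ℝ} (hf : ∀ y, 0 < f y) :
    ((List.range (r + 1)).filter (fun j => Odd j)).foldl (fun h j => applyATogs C (rl j) h)
      (deltaMap (thetaMap C f)) = nablaMap (parityToggle C rk Even f) := by
  have heven : ∀ y, ¬ Odd (rk y) →
      deltaMap (thetaMap C f) y = nablaMap (parityToggle C rk Even f) y := fun y hy =>
    (nablaMap_parityToggle hrk (fun _ => Nat.even_add_one) hC hf (Nat.not_odd_iff_even.1 hy)).symm
  simp only [applyATogs_rankList_eq hrk hrl]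
  rw [List.foldl_rankUpdate_eq rk _ _ (nablaMap (parityToggle C rk Even f)) _ ?_]
  · funext x
    by_cases hx : Odd (rk x)
    · simp [hx, Nat.lt_succ_iff.2 (hrk.le x)]
    · simp [hx, heven x hx]
  intro l₁ j l₂ hl x hxj
  obtain ⟨hj, hmem⟩ := List.of_filter_range_eq_append_cons hl
  subst hxj
  refine div_Upsilon_eq_nablaMap hrk hC hf (parityToggle_pos hC hf)
    (if_neg (Nat.not_even_iff_odd.2 hj)) (fun y hy => ?_) fun y hy => if_neg fun h => ?_
  · by_cases hyo : Odd (rk y)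
    · exact if_pos ((hmem _).2 ⟨hyo, hy⟩)
    · split_ifs
      exacts [rfl, heven y hyo]
  · exact absurd ((hmem _).1 h).2 (not_lt.2 hy)

theorem foldl_applyATogs_even_eq (hC : 0 < C) {f : P → ℝ} (hf : ∀ y, 0 < f y) :
    ((List.range (r + 1)).filter (fun j => Even j)).reverse.foldl
      (fun h j => applyATogs C (rl j) h) (nablaMap f)
      = deltaMap (thetaMap C (parityToggle C rk Odd f)) := by
  have hodd : ∀ y, ¬ Even (rk y) →
      nablaMap f y = deltaMap (thetaMap C (parityToggle C rk Odd f)) y := fun y hy =>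
    (deltaMap_thetaMap_parityToggle hrk (fun _ => Nat.odd_add_one) hC hf
      (Nat.not_even_iff_odd.1 hy)).symm
  simp only [applyATogs_rankList_eq hrk hrl]
  rw [List.foldl_rankUpdate_eq rk _ _ (deltaMap (thetaMap C (parityToggle C rk Odd f))) _ ?_]
  · funext x
    by_cases hx : Even (rk x)
    · simp [hx, Nat.lt_succ_iff.2 (hrk.le x)]
    · simp [hx, hodd x hx]
  intro l₁ j l₂ hl x hxj
  obtain ⟨hj, hmem⟩ := List.of_reverse_filter_range_eq_append_cons hl
  subst hxj
  refine div_Upsilon_eq_deltaMap_thetaMap hrk hC hf (parityToggle_pos hC hf)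
    (if_neg (Nat.not_odd_iff_even.2 hj)) (fun y hy => if_neg fun h => ?_) fun y hy => ?_
  · exact absurd ((hmem _).1 h).2.1 (not_lt.2 hy)
  · by_cases hye : Even (rk y)
    · exact if_pos ((hmem _).2 ⟨hye, hy, Nat.lt_succ_iff.2 (hrk.le y)⟩)
    · split_ifs
      exacts [rfl, hodd y hye]

theorem BAGapp_deltaMap_thetaMap (hC : 0 < C) {f : P → ℝ} (hf : ∀ y, 0 < f y) :
    BAGapp C rl r (deltaMap (thetaMap C f)) = deltaMap (thetaMap C (BOGapp C rl r f)) := by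
  rw [BAGapp, foldl_applyATogs_odd_eq hrk hrl hC hf,
    foldl_applyATogs_even_eq hrk hrl hC (parityToggle_pos hC hf), BOGapp_eq_parityToggle hrk hrl]

end Gyration

/-- Let `P` be a finite graded poset.  Then birational antichain
gyration and birational order gyration are intertwined by `Θ ∘ Δ⁻¹`:
`Θ ∘ Δ⁻¹ ∘ BAG = BOG ∘ Θ ∘ Δ⁻¹` on positive labelings. -/
theorem theta_deltaInv_BAG_eq_BOG (C : ℝ) (hC : 0 < C)
    (rk : P → ℕ) (r : ℕ) (hrk : IsRankFunction rk r)
    (rl : ℕ → List P) (hrl : ∀ j, (rl j).Nodup ∧ ∀ x : P, x ∈ rl j ↔ rk x = j)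
    (g : P → ℝ) (hg : ∀ x, 0 < g x) :
    thetaMap C (deltaInvMap (BAGapp C rl r g))
      = BOGapp C rl r (thetaMap C (deltaInvMap g)) := by
  set f := thetaMap C (deltaInvMap g)
  have hf : ∀ y, 0 < f y := thetaMap_pos hC (deltaInvMap_pos hg)
  have hg_eq : g = deltaMap (thetaMap C f) := by
    rw [thetaMap_thetaMap hC.ne', deltaMap_deltaInvMap hg]
  have hBOG : ∀ y, 0 < BOGapp C rl r f y := by
    rw [BOGapp_eq_parityToggle hrk hrl]
    exact parityToggle_pos hC (parityToggle_pos hC hf)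
  rw [hg_eq, BAGapp_deltaMap_thetaMap hrk hrl hC hf,
    deltaInvMap_deltaMap (thetaMap_pos hC hBOG), thetaMap_thetaMap hC.ne']
end

section
/- Let P be a finite poset and u, v ∈ P such that neither u covers v nor v covers u. Then the noncommutative order toggles and elggots at u and v commute: T_u ∘ T_v = T_v ∘ T_u, E_u ∘ E_v = E_v ∘ E_u, T_u ∘ E_v = E_v ∘ T_u, and E_u ∘ T_v = T_v ∘ E_u, on all S-labelings for which both sides are defined (i.e., every element inverted in the computation is nonzero). -/
/-!
Noncommutative (skew field) antichain/order toggling and rowmotion on a finite poset `P`,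
with labels in a division ring `S` and a fixed central element `C`, following
Joseph–Roby, "Birational and noncommutative lifts of antichain toggling and rowmotion".
All maps are partial; definedness ("every element inverted in the computation is
nonzero") is recorded by explicit predicates.
-/

open Finset

attribute [local instance] Classical.propDecidable

variable {P : Type*} [Fintype P] [PartialOrder P] {S : Type*} [DivisionRing S]

/-- `∑_{u ∈ P̂, u ⋖ v} f(u)`, with the convention `f(0̂) = 1`. -/
noncomputable def lSum (f : P → S) (v : P) : S :=
  (if IsMin v then 1 else 0) + ∑ u ∈ univ.filter (fun u => u ⋖ v), f u

/-- `∑_{u ∈ P̂, u ⋗ v} f(u)⁻¹`, with the convention `f(1̂) = C`; its inverse is the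
parallel sum `⫲_{u ∈ P̂, u ⋗ v} f(u)` (where `x ⫲ y = (x⁻¹ + y⁻¹)⁻¹`). -/
noncomputable def uInvSum (C : S) (f : P → S) (v : P) : S :=
  (if IsMax v then C⁻¹ else 0) + ∑ u ∈ univ.filter (fun u => v ⋖ u), (f u)⁻¹

/-- The noncommutative order toggle `T_v`: it replaces the label at `v` by
`(∑_{u ∈ P̂, u ⋖ v} f(u)) · f(v)⁻¹ · (⫲_{u ∈ P̂, u ⋗ v} f(u))` and fixes all other
labels. -/
noncomputable def ncT (C : S) (v : P) (f : P → S) : P → S :=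
  fun x => if x = v then lSum f v * (f v)⁻¹ * (uInvSum C f v)⁻¹ else f x

/-- The noncommutative order elggot `E_v`: it replaces the label at `v` by
`(⫲_{u ∈ P̂, u ⋗ v} f(u)) · f(v)⁻¹ · (∑_{u ∈ P̂, u ⋖ v} f(u))` and fixes all other
labels. -/
noncomputable def ncE (C : S) (v : P) (f : P → S) : P → S :=
  fun x => if x = v then (uInvSum C f v)⁻¹ * (f v)⁻¹ * lSum f v else f x

/-- Definedness of one application of `T_v` or `E_v` to `f`: every element inverted in
the computation (the label `f(v)`, the labels `f(u)` of the upper covers `u` of `v` in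
`P̂`, and the sum of their inverses) is nonzero. -/
def ncODef (C : S) (v : P) (f : P → S) : Prop :=
  f v ≠ 0 ∧ (∀ u : P, v ⋖ u → f u ≠ 0) ∧ (IsMax v → C ≠ 0) ∧ uInvSum C f v ≠ 0

/-- The element `∑ g(y_{c-1})⋯g(y₁) · g(y_k)⋯g(y_c)` inverted by the noncommutative
antichain toggle `τ_v`, summed over all maximal chains `0̂ ⋖ y₁ ⋖ ⋯ ⋖ y_k ⋖ 1̂` of `P̂`
with `y_c = v` (indices decrease by 1 within each factor). -/
noncomputable def tauDenom (g : P → S) (v : P) : S :=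
  ∑ k ∈ range (Fintype.card P),
    ∑ c ∈ univ.filter (fun c : Fin (k + 1) → P => MaxChain c),
      ∑ j ∈ univ.filter (fun j : Fin (k + 1) => c j = v),
        (((List.ofFn (g ∘ c)).take j.1).reverse).prod *
          (((List.ofFn (g ∘ c)).drop j.1).reverse).prod

/-- The element `∑ g(y_c)⋯g(y₁) · g(y_k)⋯g(y_{c+1})` inverted by the noncommutative
antichain elggot `ε_v`, summed over all maximal chains `0̂ ⋖ y₁ ⋖ ⋯ ⋖ y_k ⋖ 1̂` of `P̂`
with `y_c = v`. -/
noncomputable def epsDenom (g : P → S) (v : P) : S :=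
  ∑ k ∈ range (Fintype.card P),
    ∑ c ∈ univ.filter (fun c : Fin (k + 1) → P => MaxChain c),
      ∑ j ∈ univ.filter (fun j : Fin (k + 1) => c j = v),
        (((List.ofFn (g ∘ c)).take (j.1 + 1)).reverse).prod *
          (((List.ofFn (g ∘ c)).drop (j.1 + 1)).reverse).prod

/-- The noncommutative antichain toggle `τ_v`: it replaces the label at `v` by
`C · (∑ g(y_{c-1})⋯g(y₁) · g(y_k)⋯g(y_c))⁻¹` and fixes all other labels. -/
noncomputable def ncTau (C : S) (v : P) (g : P → S) : P → S :=
  fun x => if x = v then C * (tauDenom g v)⁻¹ else g x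

/-- The noncommutative antichain elggot `ε_v`: it replaces the label at `v` by
`C · (∑ g(y_c)⋯g(y₁) · g(y_k)⋯g(y_{c+1}))⁻¹` and fixes all other labels. -/
noncomputable def ncEps (C : S) (v : P) (g : P → S) : P → S :=
  fun x => if x = v then C * (epsDenom g v)⁻¹ else g x

/-- The noncommutative complement `Θ`: `(Θf)(x) = C · f(x)⁻¹`. -/
noncomputable def ncTheta (C : S) (f : P → S) : P → S := fun x => C * (f x)⁻¹

/-- The noncommutative down transfer `∇`:
`(∇f)(x) = f(x) · (∑_{y ∈ P̂, y ⋖ x} f(y))⁻¹` with `f(0̂) = 1`. -/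
noncomputable def ncNabla (f : P → S) : P → S := fun x => f x * (lSum f x)⁻¹

/-- The noncommutative inverse up transfer `Δ⁻¹`:
`(Δ⁻¹f)(x) = ∑ f(y_k)⋯f(y₂)f(y₁)` over all saturated chains
`x = y₁ ⋖ y₂ ⋖ ⋯ ⋖ y_k ⋖ 1̂` in `P̂`. -/
noncomputable def ncDeltaInv (f : P → S) : P → S := fun x =>
  ∑ k ∈ range (Fintype.card P),
    ∑ c ∈ univ.filter (fun c : Fin (k + 1) → P =>
        SatChain c ∧ c 0 = x ∧ IsMax (c (Fin.last k))),
      ((List.ofFn (f ∘ c)).reverse).prod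

/-- The noncommutative inverse down transfer `∇⁻¹`:
`(∇⁻¹f)(x) = ∑ f(y_k)⋯f(y₂)f(y₁)` over all saturated chains
`0̂ ⋖ y₁ ⋖ y₂ ⋖ ⋯ ⋖ y_k = x` in `P̂`. -/
noncomputable def ncNablaInv (f : P → S) : P → S := fun x =>
  ∑ k ∈ range (Fintype.card P),
    ∑ c ∈ univ.filter (fun c : Fin (k + 1) → P =>
        SatChain c ∧ IsMin (c 0) ∧ c (Fin.last k) = x),
      ((List.ofFn (f ∘ c)).reverse).prod

section Aux

lemma lSum_congr_aux {f g : P → S} {w : P} (h : ∀ x, x ⋖ w → g x = f x) :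
    lSum g w = lSum f w := by
  unfold lSum
  congr 1
  exact Finset.sum_congr rfl fun x hx => h x (by simpa using hx)

lemma uInvSum_congr_aux {C : S} {f g : P → S} {w : P} (h : ∀ x, w ⋖ x → g x = f x) :
    uInvSum C g w = uInvSum C f w := by
  unfold uInvSum
  congr 1
  exact Finset.sum_congr rfl fun x hx => by rw [h x (by simpa using hx)]

/-- Generic "toggle-like" operation at `w`: replace the label at `w` by a function of
`lSum f w`, `f w`, `uInvSum C f w`. -/
noncomputable def opGen (φ : S → S → S → S) (C : S) (w : P) (f : P → S) : P → S :=
  fun x => if x = w then φ (lSum f w) (f w) (uInvSum C f w) else f x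

lemma opGen_apply_self (φ : S → S → S → S) (C : S) (w : P) (f : P → S) :
    opGen φ C w f w = φ (lSum f w) (f w) (uInvSum C f w) := if_pos rfl

lemma opGen_apply_ne (φ : S → S → S → S) (C : S) {w x : P} (f : P → S) (h : x ≠ w) :
    opGen φ C w f x = f x := if_neg h

lemma opGen_lSum (φ : S → S → S → S) (C : S) {a b : P} (f : P → S) (hba : ¬ b ⋖ a) :
    lSum (opGen φ C b f) a = lSum f a :=
  lSum_congr_aux fun x hx => opGen_apply_ne φ C f (fun h : x = b => hba (h ▸ hx))

lemma opGen_uInvSum (φ : S → S → S → S) (C : S) {a b : P} (f : P → S) (hab : ¬ a ⋖ b) :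
    uInvSum C (opGen φ C b f) a = uInvSum C f a :=
  uInvSum_congr_aux fun x hx => opGen_apply_ne φ C f (fun h : x = b => hab (h ▸ hx))

lemma opGen_comm (φ ψ : S → S → S → S) (C : S) {u v : P} (huv : u ≠ v)
    (h1 : ¬ u ⋖ v) (h2 : ¬ v ⋖ u) (f : P → S) :
    opGen φ C u (opGen ψ C v f) = opGen ψ C v (opGen φ C u f) := by
  funext x
  by_cases hx : x = u
  · rw [hx]
    simp only [opGen_apply_ne ψ C (opGen φ C u f) huv, opGen_apply_self,
      opGen_apply_ne ψ C f huv, opGen_lSum ψ C f h2, opGen_uInvSum ψ C f h1]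
  · by_cases hx' : x = v
    · rw [hx']
      simp only [opGen_apply_ne φ C (opGen ψ C v f) (Ne.symm huv), opGen_apply_self,
        opGen_apply_ne φ C f (Ne.symm huv), opGen_lSum φ C f h1, opGen_uInvSum φ C f h2]
    · simp only [opGen_apply_ne φ C _ hx, opGen_apply_ne ψ C _ hx']

lemma ncT_eq_opGen (C : S) (w : P) (f : P → S) :
    ncT C w f = opGen (fun a b c => a * b⁻¹ * c⁻¹) C w f := rfl

lemma ncE_eq_opGen (C : S) (w : P) (f : P → S) :
    ncE C w f = opGen (fun a b c => c⁻¹ * b⁻¹ * a) C w f := rfl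

lemma ncT_ncE_same (C : S) (w : P) (f : P → S) :
    ncT C w (ncE C w f) = ncE C w (ncT C w f) := by
  rw [ncT_eq_opGen, ncE_eq_opGen, ncE_eq_opGen, ncT_eq_opGen]
  have hww : ¬ (w : P) ⋖ w := fun h => lt_irrefl w h.lt
  funext x
  by_cases hx : x = w
  · rw [hx]
    simp only [opGen_apply_self,
      opGen_lSum (fun a b c : S => a * b⁻¹ * c⁻¹) C f hww,
      opGen_uInvSum (fun a b c : S => a * b⁻¹ * c⁻¹) C f hww,
      opGen_lSum (fun a b c : S => c⁻¹ * b⁻¹ * a) C f hww,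
      opGen_uInvSum (fun a b c : S => c⁻¹ * b⁻¹ * a) C f hww]
    set L := lSum f w
    set U := uInvSum C f w
    set a := f w
    by_cases hL : L = 0 <;> by_cases hU : U = 0 <;>
      simp only [hL, hU, mul_inv_rev, inv_inv, inv_zero, zero_mul, mul_zero]
    rw [mul_inv_cancel_left₀ hL, mul_inv_cancel_right₀ hU, inv_mul_cancel_left₀ hU,
      inv_mul_cancel_right₀ hL]
  · simp only [opGen_apply_ne _ C _ hx]

end Aux

/-- If neither `u` covers `v` nor `v` covers `u` in the finite poset
`P`, then the noncommutative order toggles and elggots at `u` and `v` commute: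
`T_u ∘ T_v = T_v ∘ T_u`, `E_u ∘ E_v = E_v ∘ E_u`, `T_u ∘ E_v = E_v ∘ T_u` and
`E_u ∘ T_v = T_v ∘ E_u`, on all `S`-labelings for which both sides are defined. -/
theorem ncT_ncE_commute (C : S) (hC : ∀ s : S, C * s = s * C) (u v : P)
    (h1 : ¬ u ⋖ v) (h2 : ¬ v ⋖ u) (f : P → S) :
    (ncODef C v f → ncODef C u (ncT C v f) → ncODef C u f → ncODef C v (ncT C u f) →
      ncT C u (ncT C v f) = ncT C v (ncT C u f)) ∧
    (ncODef C v f → ncODef C u (ncE C v f) → ncODef C u f → ncODef C v (ncE C u f) →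
      ncE C u (ncE C v f) = ncE C v (ncE C u f)) ∧
    (ncODef C v f → ncODef C u (ncE C v f) → ncODef C u f → ncODef C v (ncT C u f) →
      ncT C u (ncE C v f) = ncE C v (ncT C u f)) ∧
    (ncODef C v f → ncODef C u (ncT C v f) → ncODef C u f → ncODef C v (ncE C u f) →
      ncE C u (ncT C v f) = ncT C v (ncE C u f)) := by
  by_cases huv : u = v
  · subst huv
    exact ⟨fun _ _ _ _ => rfl, fun _ _ _ _ => rfl,
      fun _ _ _ _ => ncT_ncE_same C u f, fun _ _ _ _ => (ncT_ncE_same C u f).symm⟩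
  · refine ⟨fun _ _ _ _ => ?_, fun _ _ _ _ => ?_, fun _ _ _ _ => ?_, fun _ _ _ _ => ?_⟩ <;>
      simp only [ncT_eq_opGen, ncE_eq_opGen] <;>
      exact opGen_comm _ _ C huv h1 h2 f
end

section
/- Let P be a finite poset and v ∈ P. The noncommutative order toggle T_v and the noncommutative order elggot E_v are mutually inverse partial maps: E_v(T_v(f)) = f and T_v(E_v(f)) = f for every S-labeling f of P for which the compositions are defined (i.e., every element inverted in the computation is nonzero). -/
/-!
Noncommutative (skew field) antichain/order toggling and rowmotion on a finite poset `P`,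
with labels in a division ring `S` and a fixed central element `C`, following
Joseph–Roby, "Birational and noncommutative lifts of antichain toggling and rowmotion".
All maps are partial; definedness ("every element inverted in the computation is
nonzero") is recorded by explicit predicates.
-/

open Finset

attribute [local instance] Classical.propDecidable

variable {P : Type*} [Fintype P] [PartialOrder P] {S : Type*} [DivisionRing S]

/- The sums at `v` only see labels of covers of `v`, so they survive toggling at `v`; the
inverse property then reduces to `U⁻¹ (L a⁻¹ U⁻¹)⁻¹ L = a` for `L, U ≠ 0`. -/
theorem lSum_update_self (f : P → S) (v : P) (a : S) :
    lSum (Function.update f v a) v = lSum f v := by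
  unfold lSum
  congr 1
  refine sum_congr rfl fun u hu => Function.update_of_ne ?_ a f
  exact (mem_filter.mp hu).2.lt.ne

theorem uInvSum_update_self (C : S) (f : P → S) (v : P) (a : S) :
    uInvSum C (Function.update f v a) v = uInvSum C f v := by
  unfold uInvSum
  congr 1
  refine sum_congr rfl fun u hu => ?_
  rw [Function.update_of_ne (mem_filter.mp hu).2.lt.ne']

theorem ncT_eq_update (C : S) (v : P) (f : P → S) :
    ncT C v f = Function.update f v (lSum f v * (f v)⁻¹ * (uInvSum C f v)⁻¹) := by
  funext x
  by_cases hx : x = v <;> simp [ncT, Function.update, hx]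

theorem ncE_eq_update (C : S) (v : P) (f : P → S) :
    ncE C v f = Function.update f v ((uInvSum C f v)⁻¹ * (f v)⁻¹ * lSum f v) := by
  funext x
  by_cases hx : x = v <;> simp [ncE, Function.update, hx]

theorem ncE_ncT_inverse_general (C : S) (v : P) (f : P → S) :
    (ncODef C v f → ncODef C v (ncT C v f) → ncE C v (ncT C v f) = f) ∧
    (ncODef C v f → ncODef C v (ncE C v f) → ncT C v (ncE C v f) = f) := by
  constructor
  · rintro ⟨-, -, -, hU⟩ ⟨hTv, -⟩
    rw [ncT_eq_update, Function.update_self] at hTv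
    have hL : lSum f v ≠ 0 := left_ne_zero_of_mul (left_ne_zero_of_mul hTv)
    rw [ncT_eq_update, ncE_eq_update, lSum_update_self, uInvSum_update_self,
      Function.update_idem, Function.update_self]
    convert Function.update_eq_self v f using 2
    simp [mul_assoc, hU, hL]
  · rintro ⟨-, -, -, hU⟩ ⟨hEv, -⟩
    rw [ncE_eq_update, Function.update_self] at hEv
    have hL : lSum f v ≠ 0 := right_ne_zero_of_mul hEv
    rw [ncE_eq_update, ncT_eq_update, lSum_update_self, uInvSum_update_self,
      Function.update_idem, Function.update_self]
    convert Function.update_eq_self v f using 2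
    simp [mul_assoc, hU, hL]

/-- For `v ∈ P`, the noncommutative order toggle `T_v` and the
noncommutative order elggot `E_v` are mutually inverse partial maps:
`E_v(T_v(f)) = f` and `T_v(E_v(f)) = f` whenever the compositions are defined. -/
theorem ncE_ncT_inverse (C : S) (hC : ∀ s : S, C * s = s * C) (v : P) (f : P → S) :
    (ncODef C v f → ncODef C v (ncT C v f) → ncE C v (ncT C v f) = f) ∧
    (ncODef C v f → ncODef C v (ncE C v f) → ncT C v (ncE C v f) = f) :=
  ncE_ncT_inverse_general C v f
end
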